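/- arXiv:2204.03337 — 2 statements merged into one kernel-verified Lean document; each statement's English description precedes it below -/
import Mathlib

section
/- Let A, Q be symmetric positive semidefinite N×N real matrices with tr(A) = tr(Q) = 1/2. If |Q e| ≤ |A e| for every unit vector e ∈ ℝ^N, then A = Q. -/
/-!
For symmetric `A`, `|A e|² = e ⬝ A² e`, so by homogeneity the hypothesis says exactly that
`A² - Q²` is positive semidefinite. Square roots are operator monotone, hence `A - Q` is
positive semidefinite: if `(A - Q) v = μ v` with `μ < 0`, then `v ⬝ (A² - Q²) v = μ (v ⬝ (A + Q) v)`
forces `A v = Q v = 0`, so `μ v = 0`. Finally a positive semidefinite matrix of trace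
`tr A - tr Q = 0` vanishes.
-/

open Matrix
open scoped ComplexOrder

theorem LinearMap.norm_apply_le_of_forall_norm_eq_one {𝕜 E F G : Type*} [RCLike 𝕜]
    [NormedAddCommGroup E] [NormedSpace 𝕜 E] [SeminormedAddCommGroup F] [NormedSpace 𝕜 F]
    [SeminormedAddCommGroup G] [NormedSpace 𝕜 G] (f : E →ₗ[𝕜] F) (g : E →ₗ[𝕜] G)
    (h : ∀ e, ‖e‖ = 1 → ‖f e‖ ≤ ‖g e‖) (x : E) : ‖f x‖ ≤ ‖g x‖ := by
  rcases eq_or_ne x 0 with rfl | hx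
  · simp
  have hx' : 0 < ‖x‖ := norm_pos_iff.mpr hx
  have hunit : ‖((‖x‖⁻¹ : ℝ) : 𝕜) • x‖ = 1 := by
    rw [norm_smul, RCLike.norm_ofReal, abs_inv, abs_norm, inv_mul_cancel₀ hx'.ne']
  have hscaled := h _ hunit
  rw [map_smul, map_smul, norm_smul, norm_smul] at hscaled
  exact le_of_mul_le_mul_left hscaled (by simpa using hx')

namespace Matrix

variable {𝕜 m n : Type*} [RCLike 𝕜] [Fintype m] [Fintype n]

theorem dotProduct_mul_add_mul_mulVec_of_mulVec_eq_smul {A B M : Matrix n n 𝕜}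
    (hM : M.IsHermitian) {v : n → 𝕜} {μ : ℝ} (hv : M *ᵥ v = μ • v) :
    star v ⬝ᵥ (A * M + M * B) *ᵥ v = μ • (star v ⬝ᵥ (A + B) *ᵥ v) := by
  have hvM : star v ᵥ* M = μ • star v := by
    rw [← hM.eq, ← star_mulVec, hv, star_smul, star_trivial]
  rw [add_mulVec, add_mulVec, dotProduct_add, dotProduct_add, ← mulVec_mulVec, ← mulVec_mulVec,
    hv, mulVec_smul, dotProduct_smul, dotProduct_mulVec _ M, hvM, smul_dotProduct, smul_add]

variable [DecidableEq n]

theorem PosSemidef.sub_of_mul_self_sub {A B : Matrix n n 𝕜} (hA : A.PosSemidef)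
    (hB : B.PosSemidef) (h : (A * A - B * B).PosSemidef) : (A - B).PosSemidef := by
  have hD := hA.isHermitian.sub hB.isHermitian
  refine hD.posSemidef_iff_eigenvalues_nonneg.mpr fun i => ?_
  by_contra! hneg
  set μ := hD.eigenvalues i
  set v := WithLp.ofLp (hD.eigenvectorBasis i)
  have hv0 : v ≠ 0 := by simpa [v] using hD.eigenvectorBasis.orthonormal.ne_zero i
  have hv : (A - B) *ᵥ v = μ • v := hD.mulVec_eigenvectorBasis i
  have hq : star v ⬝ᵥ (A * A - B * B) *ᵥ v = (μ : 𝕜) * (star v ⬝ᵥ (A + B) *ᵥ v) := by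
    rw [show A * A - B * B = A * (A - B) + (A - B) * B by noncomm_ring,
      dotProduct_mul_add_mul_mulVec_of_mulVec_eq_smul hD hv, RCLike.real_smul_eq_coe_mul]
  have hsum : star v ⬝ᵥ (A + B) *ᵥ v = 0 := by
    have hμ : (μ : 𝕜) < 0 := by exact_mod_cast hneg
    have hprod : (μ : 𝕜) * (star v ⬝ᵥ (A + B) *ᵥ v) = 0 :=
      le_antisymm (mul_nonpos_of_nonpos_of_nonneg hμ.le ((hA.add hB).dotProduct_mulVec_nonneg v))
        (hq ▸ h.dotProduct_mulVec_nonneg v)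
    exact (mul_eq_zero.mp hprod).resolve_left hμ.ne
  rw [add_mulVec, dotProduct_add] at hsum
  obtain ⟨hAv, hBv⟩ := (add_eq_zero_iff_of_nonneg (hA.dotProduct_mulVec_nonneg v)
    (hB.dotProduct_mulVec_nonneg v)).mp hsum
  rw [hA.dotProduct_mulVec_zero_iff] at hAv
  rw [hB.dotProduct_mulVec_zero_iff] at hBv
  rw [sub_mulVec, hAv, hBv, sub_zero, eq_comm, smul_eq_zero] at hv
  exact hv.elim hneg.ne hv0

theorem dotProduct_conjTranspose_mul_self_mulVec (C : Matrix m n 𝕜) (x : n → 𝕜) :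
    star x ⬝ᵥ (Cᴴ * C) *ᵥ x = ((‖toEuclideanLin C (WithLp.toLp 2 x)‖ ^ 2 : ℝ) : 𝕜) := by
  rw [← mulVec_mulVec, dotProduct_mulVec, ← star_mulVec, RCLike.ofReal_pow,
    ← inner_self_eq_norm_sq_to_K, dotProduct_comm]
  rfl

theorem posSemidef_conjTranspose_mul_self_sub_of_norm_le {A B : Matrix m n 𝕜}
    (h : ∀ x, ‖toEuclideanLin B x‖ ≤ ‖toEuclideanLin A x‖) : (Aᴴ * A - Bᴴ * B).PosSemidef := by
  refine .of_dotProduct_mulVec_nonneg ((isHermitian_conjTranspose_mul_self A).sub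
    (isHermitian_conjTranspose_mul_self B)) fun x => ?_
  rw [sub_mulVec, dotProduct_sub, dotProduct_conjTranspose_mul_self_mulVec,
    dotProduct_conjTranspose_mul_self_mulVec, ← RCLike.ofReal_sub, RCLike.ofReal_nonneg,
    sub_nonneg]
  exact pow_le_pow_left₀ (norm_nonneg _) (h _) 2

end Matrix

theorem matrix_eq_of_norm_mulVec_le_general
    (N : ℕ) (A Q : Matrix (Fin N) (Fin N) ℝ)
    (hApsd : A.PosSemidef) (hQpsd : Q.PosSemidef)
    (hAtr : A.trace = 1 / 2) (hQtr : Q.trace = 1 / 2)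
    (h : ∀ e : EuclideanSpace ℝ (Fin N), ‖e‖ = 1 →
      ‖(EuclideanSpace.equiv (Fin N) ℝ).symm (Q.mulVec e)‖ ≤
        ‖(EuclideanSpace.equiv (Fin N) ℝ).symm (A.mulVec e)‖) :
    A = Q := by
  have hunit : ∀ e : EuclideanSpace ℝ (Fin N), ‖e‖ = 1 →
      ‖toEuclideanLin Q e‖ ≤ ‖toEuclideanLin A e‖ := by
    intro e he
    simpa only [toLpLin_apply, PiLp.coe_symm_continuousLinearEquiv] using h e he
  have hsq : (A * A - Q * Q).PosSemidef := by
    simpa only [hApsd.isHermitian.eq, hQpsd.isHermitian.eq] using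
      posSemidef_conjTranspose_mul_self_sub_of_norm_le
        (LinearMap.norm_apply_le_of_forall_norm_eq_one _ _ hunit)
  have htr : (A - Q).trace = 0 := by rw [trace_sub, hAtr, hQtr, sub_self]
  exact sub_eq_zero.mp ((hApsd.sub_of_mul_self_sub hQpsd hsq).trace_eq_zero_iff.mp htr)

theorem matrix_eq_of_norm_mulVec_le
    (N : ℕ) (A Q : Matrix (Fin N) (Fin N) ℝ)
    (hAsymm : A.IsSymm) (hQsymm : Q.IsSymm)
    (hApsd : A.PosSemidef) (hQpsd : Q.PosSemidef)
    (hAtr : A.trace = 1 / 2) (hQtr : Q.trace = 1 / 2)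
    (h : ∀ e : EuclideanSpace ℝ (Fin N), ‖e‖ = 1 →
      ‖(EuclideanSpace.equiv (Fin N) ℝ).symm (Q.mulVec e)‖ ≤
        ‖(EuclideanSpace.equiv (Fin N) ℝ).symm (A.mulVec e)‖) :
    A = Q :=
  matrix_eq_of_norm_mulVec_le_general N A Q hApsd hQpsd hAtr hQtr h
end

section
/- Let u₀ ≥ 0 solve Δu₀ = χ_{u₀ > 0} in ℝ^N with blow-down p(x) = lim_{ρ→∞} u₀(ρx)/ρ² a quadratic polynomial satisfying p(x) ≥ c_p|x'|² for all x = (x', x'') ∈ ℝ^{N−n} × ℝ^n and some c_p > 0. Then the coincidence set {u₀ = 0} is bounded in every direction orthogonal to {0} × ℝ^n; more precisely, {u₀ = 0} ⊆ {x : |x'| ≤ R} for some R < ∞ intersected with each slab {|x''| ≤ M}, i.e. sup{|x'| : (x', x'') ∈ {u₀ = 0}, |x''| ≤ M} < ∞ for every M. -/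
open MeasureTheory Metric Set Filter Matrix

/-- The Laplacian of a function on Euclidean space, as the sum of pure second
partial derivatives in the coordinate directions. -/
noncomputable def lap {N : ℕ} (φ : EuclideanSpace ℝ (Fin N) → ℝ)
    (x : EuclideanSpace ℝ (Fin N)) : ℝ :=
  ∑ i : Fin N,
    fderiv ℝ (fun y => fderiv ℝ φ y (EuclideanSpace.single i (1 : ℝ))) x
      (EuclideanSpace.single i (1 : ℝ))

theorem coincidence_set_bounded_in_nondegenerate_directions
    (m n : ℕ) (u : EuclideanSpace ℝ (Fin (m + n)) → ℝ)
    (hu_cont : Continuous u) (hu_nonneg : ∀ x, 0 ≤ u x)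
    -- global distributional equation Δu = χ_{u>0}
    (hpde : ∀ φ : EuclideanSpace ℝ (Fin (m + n)) → ℝ, ContDiff ℝ (⊤ : ℕ∞) φ →
      HasCompactSupport φ →
      ∫ x, u x * lap φ x = ∫ x in {x | 0 < u x}, φ x)
    (A : Matrix (Fin (m + n)) (Fin (m + n)) ℝ) (hAsymm : A.IsSymm)
    (p : EuclideanSpace ℝ (Fin (m + n)) → ℝ)
    (hp : ∀ x, p x = ⇑x ⬝ᵥ A.mulVec ⇑x)
    (c_p : ℝ) (hc_p : 0 < c_p)
    (hp_lower : ∀ x : EuclideanSpace ℝ (Fin (m + n)),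
      c_p * (∑ i : Fin m, x (Fin.castAdd n i) ^ 2) ≤ p x)
    -- blow-down convergence u(ρ x)/ρ² → p(x) in L^∞(∂B₁)
    (hblowdown : TendstoUniformlyOn
      (fun (ρ : ℝ) (x : EuclideanSpace ℝ (Fin (m + n))) => u (ρ • x) / ρ ^ 2)
      p atTop (sphere (0 : EuclideanSpace ℝ (Fin (m + n))) 1)) :
    ∀ M : ℝ, ∃ R : ℝ, ∀ x : EuclideanSpace ℝ (Fin (m + n)), u x = 0 →
      Real.sqrt (∑ i : Fin n, x (Fin.natAdd m i) ^ 2) ≤ M →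
      Real.sqrt (∑ i : Fin m, x (Fin.castAdd n i) ^ 2) ≤ R := by
  intro M
  rw [Metric.tendstoUniformlyOn_iff] at hblowdown
  obtain ⟨ρ₀, hρ₀⟩ := Filter.eventually_atTop.mp (hblowdown (c_p / 4) (by linarith))
  refine ⟨max ρ₀ (max M 0), fun x hux hxM => ?_⟩
  by_contra hcon
  push_neg at hcon
  set S1 : ℝ := ∑ i : Fin m, x (Fin.castAdd n i) ^ 2 with hS1
  set S2 : ℝ := ∑ i : Fin n, x (Fin.natAdd m i) ^ 2 with hS2
  have hS1nonneg : 0 ≤ S1 := Finset.sum_nonneg fun i _ => sq_nonneg _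
  have hS2nonneg : 0 ≤ S2 := Finset.sum_nonneg fun i _ => sq_nonneg _
  have ha : max ρ₀ (max M 0) < Real.sqrt S1 := hcon
  have hM0 : (0 : ℝ) ≤ M := le_trans (Real.sqrt_nonneg _) hxM
  have hS2M : S2 ≤ M ^ 2 := by
    have := Real.sq_sqrt hS2nonneg
    nlinarith [Real.sqrt_nonneg S2]
  have haS1 : max ρ₀ (max M 0) ^ 2 < S1 := by
    have h0 : (0 : ℝ) ≤ max ρ₀ (max M 0) := le_trans (le_max_of_le_right (le_max_right M 0)) (le_refl _)
    nlinarith [Real.sq_sqrt hS1nonneg, Real.sqrt_nonneg S1]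
  have hMS1 : M ^ 2 < S1 := by
    have hMle : M ≤ max ρ₀ (max M 0) := le_max_of_le_right (le_max_left M 0)
    nlinarith
  have hS1pos : 0 < S1 := lt_of_le_of_lt (sq_nonneg M) hMS1
  -- the norm of x
  have hnorm : ‖x‖ ^ 2 = S1 + S2 := by
    rw [EuclideanSpace.norm_eq, Real.sq_sqrt (Finset.sum_nonneg fun i _ => sq_nonneg _)]
    rw [Fin.sum_univ_add]
    simp [hS1, hS2, sq_abs]
  set ρ : ℝ := ‖x‖ with hρ
  have hρnonneg : 0 ≤ ρ := norm_nonneg _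
  have hρsq : ρ ^ 2 = S1 + S2 := hnorm
  have haρ : Real.sqrt S1 ≤ ρ := by
    rw [show ρ = Real.sqrt (S1 + S2) by
      rw [← hρsq, Real.sqrt_sq hρnonneg]]
    exact Real.sqrt_le_sqrt (by linarith)
  have hρpos : 0 < ρ := by
    have : (0 : ℝ) ≤ max ρ₀ (max M 0) := le_max_of_le_right (le_max_right M 0)
    linarith [lt_of_lt_of_le ha haρ]
  have hρ₀ρ : ρ₀ ≤ ρ := by
    have : ρ₀ ≤ max ρ₀ (max M 0) := le_max_left _ _
    linarith [lt_of_lt_of_le ha haρ]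
  set y : EuclideanSpace ℝ (Fin (m + n)) := ρ⁻¹ • x with hy
  have hysphere : y ∈ sphere (0 : EuclideanSpace ℝ (Fin (m + n))) 1 := by
    rw [mem_sphere_zero_iff_norm, hy, norm_smul, norm_inv, Real.norm_eq_abs,
      abs_of_pos hρpos]
    exact inv_mul_cancel₀ (ne_of_gt hρpos)
  have hkey := hρ₀ ρ hρ₀ρ y hysphere
  have hρy : ρ • y = x := by
    rw [hy, smul_smul, mul_inv_cancel₀ (ne_of_gt hρpos), one_smul]
  rw [hρy, hux] at hkey
  have hdist : |p y| < c_p / 4 := by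
    simpa [Real.dist_eq] using hkey
  have hylower := hp_lower y
  have hyc : ∀ i : Fin m, y (Fin.castAdd n i) = ρ⁻¹ * x (Fin.castAdd n i) := fun i => rfl
  have hsumy : (∑ i : Fin m, y (Fin.castAdd n i) ^ 2) = ρ⁻¹ ^ 2 * S1 := by
    simp_rw [hyc, mul_pow]
    rw [← Finset.mul_sum]
  rw [hsumy] at hylower
  have hinv : ρ⁻¹ ^ 2 * S1 = S1 / ρ ^ 2 := by
    rw [div_eq_inv_mul, inv_pow]
  have hhalf : (1 : ℝ) / 2 ≤ S1 / ρ ^ 2 := by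
    rw [le_div_iff₀ (by positivity)]
    rw [hρsq]
    linarith
  rw [hinv] at hylower
  have : c_p * (1 / 2) ≤ p y :=
    le_trans (by nlinarith) hylower
  have : p y ≤ |p y| := le_abs_self _
  linarith
end
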